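/- For every integer m ≥ 0 and every real t with |t| < √3, ∑_{n≥0} c_{m,n} · t^n = (1 − t + t²/3)^{−(m+1)}, where c_{m,n} = (1/2^n) · C(n+2m+1, n) · ∑_{j=0}^{⌊n/2⌋} (−n/2)_j · ((1−n)/2)_j / ((m+3/2)_j · j!) · (−1/3)^j. In other words, the terminating hypergeometric expression (1/2^n)·C(n+2m+1,n)·₂F₁(−n/2, −(n−1)/2; m+3/2 | −1/3) equals the coefficient of t^n in (1 − t + t²/3)^{−(m+1)}. -/

import Mathlib

/-!
Since `1 - t + t²/3 = (1 - t/2)² + t²/12`, for small `t` there is an absolutely convergent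
double expansion
`(1 - t + t²/3)^(-(m+1)) = ∑_{j,k} C(j+m, m) C(k+2j+2m+1, k) (-t²/12)^j (t/2)^k`,
and collecting the terms with `2j + k = n` gives the coefficient
`∑_j C(j+m, m) C(n+2m+1, n-2j) (-1/3)^j / 2^n`. This is `c_{m,n}`: the duplication formula
`4^j (x/2)_j ((x+1)/2)_j = (x)_{2j}` turns its Pochhammer symbols into factorials.
The zeros `(3 ± i√3)/2` of `1 - t + t²/3` have modulus `√3`, so the left-hand side is
holomorphic on the disc `|t| < √3` and its Taylor series at `0`, which is `∑ c_{m,n} tⁿ`,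
converges there.
-/

open Polynomial

/-- The coefficient `c_{m,n} = (1/2^n)·C(n+2m+1,n)·₂F₁(−n/2, −(n−1)/2; m+3/2 | −1/3)`
(a terminating hypergeometric sum). -/
noncomputable def airyCoeffC (m n : ℕ) : ℝ :=
  (1 / 2 ^ n) * (Nat.choose (n + 2 * m + 1) n : ℝ) *
    ∑ j ∈ Finset.range (n / 2 + 1),
      (ascPochhammer ℝ j).eval (-(n : ℝ) / 2) *
        (ascPochhammer ℝ j).eval ((1 - (n : ℝ)) / 2) /
        ((ascPochhammer ℝ j).eval ((m : ℝ) + 3 / 2) * (Nat.factorial j : ℝ)) *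
        (-1 / 3 : ℝ) ^ j

open Finset Metric NNReal

section Pochhammer

variable {K : Type*} [Field K] [CharZero K]

theorem four_pow_mul_ascPochhammer_eval_half_mul (x : K) (j : ℕ) :
    4 ^ j * ((ascPochhammer K j).eval (x / 2) * (ascPochhammer K j).eval ((x + 1) / 2)) =
      (ascPochhammer K (2 * j)).eval x := by
  induction j with
  | zero => simp
  | succ j ih =>
    rw [show 2 * (j + 1) = 2 * j + 1 + 1 by ring, ascPochhammer_succ_eval,
      ascPochhammer_succ_eval, ascPochhammer_succ_eval, ascPochhammer_succ_eval, ← ih]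
    push_cast
    ring

theorem ascPochhammer_eval_neg_half_mul_eval_one_sub_half {n j : ℕ} (hj : 2 * j ≤ n) :
    (ascPochhammer K j).eval (-(n : K) / 2) * (ascPochhammer K j).eval ((1 - (n : K)) / 2) =
      n.factorial / (4 ^ j * (n - 2 * j).factorial) := by
  have h := four_pow_mul_ascPochhammer_eval_half_mul (-(n : K)) j
  rw [neg_add_eq_sub, ascPochhammer_eval_neg_eq_descPochhammer,
    descPochhammer_eval_eq_descFactorial, pow_mul] at h
  rw [eq_div_iff (by simp [Nat.factorial_ne_zero]), ← Nat.factorial_mul_descFactorial hj]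
  push_cast
  linear_combination ((n - 2 * j).factorial : K) * h

theorem ascPochhammer_eval_add_three_halves (m j : ℕ) :
    (ascPochhammer K j).eval ((m : K) + 3 / 2) =
      (2 * (j + m) + 1).factorial * m.factorial /
        (4 ^ j * (j + m).factorial * (2 * m + 1).factorial) := by
  have h := four_pow_mul_ascPochhammer_eval_half_mul ((2 * m + 1 + 1 : ℕ) : K) j
  rw [show ((2 * m + 1 + 1 : ℕ) : K) / 2 = ((m + 1 : ℕ) : K) by push_cast; ring,
    show (((2 * m + 1 + 1 : ℕ) : K) + 1) / 2 = m + 3 / 2 by push_cast; ring,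
    ← Nat.cast_ascFactorial, ← Nat.cast_ascFactorial] at h
  have h₁ : ((2 * m + 1).factorial : K) * (2 * m + 1 + 1).ascFactorial (2 * j) =
      (2 * (j + m) + 1).factorial := by
    rw [show 2 * (j + m) + 1 = 2 * m + 1 + 2 * j by ring]
    exact_mod_cast Nat.factorial_mul_ascFactorial _ _
  have h₂ : (m.factorial : K) * (m + 1).ascFactorial j = (j + m).factorial := by
    rw [add_comm j]
    exact_mod_cast Nat.factorial_mul_ascFactorial _ _
  rw [eq_div_iff (by simp [Nat.factorial_ne_zero]), ← h₁, ← h₂, ← h]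
  ring

end Pochhammer

theorem airyCoeffC_eq_sum_choose (m n : ℕ) :
    airyCoeffC m n = ∑ j ∈ range (n / 2 + 1),
      ((j + m).choose m : ℝ) * ((n + 2 * m + 1).choose (2 * (j + m) + 1) : ℝ) *
        (-1 / 3) ^ j / 2 ^ n := by
  rw [airyCoeffC, mul_assoc, mul_sum, mul_sum]
  refine sum_congr rfl fun j hj => ?_
  have hj : 2 * j ≤ n := by have := mem_range.mp hj; omega
  rw [ascPochhammer_eval_neg_half_mul_eval_one_sub_half hj, ascPochhammer_eval_add_three_halves,
    Nat.cast_choose ℝ (show n ≤ n + 2 * m + 1 by omega),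
    Nat.cast_choose ℝ (show 2 * (j + m) + 1 ≤ n + 2 * m + 1 by omega),
    Nat.cast_choose ℝ (show m ≤ j + m by omega), show n + 2 * m + 1 - n = 2 * m + 1 by omega,
    show n + 2 * m + 1 - (2 * (j + m) + 1) = n - 2 * j by omega, Nat.add_sub_cancel]
  field_simp

theorem HasSum.sum_range_two_mul_add {α : Type*} [AddCommMonoid α] [TopologicalSpace α]
    [ContinuousAdd α] [RegularSpace α] {f : ℕ × ℕ → α} {a : α} (h : HasSum f a) :
    HasSum (fun n => ∑ j ∈ range (n / 2 + 1), f (j, n - 2 * j)) a := by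
  -- transport `f` along `(j, k) ↦ (2j + k, j)` and sum over the first coordinate
  let g : ℕ × ℕ → α := fun q => if 2 * q.2 ≤ q.1 then f (q.2, q.1 - 2 * q.2) else 0
  have hinj : Function.Injective fun p : ℕ × ℕ => (2 * p.1 + p.2, p.1) := by
    intro p q hpq
    simp only [Prod.mk.injEq] at hpq
    ext <;> omega
  have hg : HasSum g a := by
    refine (hinj.hasSum_iff fun q hq => if_neg fun hle =>
      hq ⟨(q.2, q.1 - 2 * q.2), Prod.ext (Nat.add_sub_of_le hle) rfl⟩).mp ?_
    convert h using 1
    ext p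
    simp only [Function.comp_apply, if_pos (Nat.le_add_right _ _), Nat.add_sub_cancel_left]
  refine hg.prod_fiberwise fun n => ?_
  have hfin : HasSum (fun j => g (n, j)) (∑ j ∈ range (n / 2 + 1), g (n, j)) :=
    hasSum_sum_of_ne_finset_zero fun j hj => if_neg (by rw [mem_range] at hj; omega)
  rwa [sum_congr rfl fun j hj => if_pos (by rw [mem_range] at hj; omega)] at hfin

section DoubleSeries

variable {𝕜 : Type*} [RCLike 𝕜]

def invPowDoubleTerm (m : ℕ) (x y : 𝕜) (p : ℕ × ℕ) : 𝕜 :=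
  ((p.1 + m).choose m : 𝕜) * ((p.2 + (2 * (p.1 + m) + 1)).choose (2 * (p.1 + m) + 1) : 𝕜) *
    x ^ p.1 * y ^ p.2

theorem hasSum_invPowDoubleTerm_fiber (m : ℕ) (x : 𝕜) {y : 𝕜} (hy : ‖y‖ < 1) (j : ℕ) :
    HasSum (fun k => invPowDoubleTerm m x y (j, k))
      (((j + m).choose m : 𝕜) * x ^ j / ((1 - y) ^ 2) ^ (j + m + 1)) := by
  have h := (hasSum_choose_mul_geometric_of_norm_lt_one (2 * (j + m) + 1) hy).mul_left
    (((j + m).choose m : 𝕜) * x ^ j)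
  rw [show 2 * (j + m) + 1 + 1 = 2 * (j + m + 1) by ring, pow_mul, mul_one_div] at h
  exact h.congr_fun fun k => by simp only [invPowDoubleTerm]; ring

theorem hasSum_invPowDoubleTerm_fiber_sums (m : ℕ) {x y : 𝕜} (hy : ‖y‖ < 1)
    (hx : ‖x‖ < (1 - ‖y‖) ^ 2) :
    HasSum (fun j => ((j + m).choose m : 𝕜) * x ^ j / ((1 - y) ^ 2) ^ (j + m + 1))
      ((((1 - y) ^ 2 - x) ^ (m + 1))⁻¹) := by
  have hy' : 1 - ‖y‖ ≤ ‖1 - y‖ := by simpa using norm_sub_norm_le (1 : 𝕜) y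
  have hu : (1 - y) ^ 2 ≠ 0 := by
    refine pow_ne_zero 2 fun h => ?_
    rw [h, norm_zero] at hy'
    linarith
  have hq : ‖x / (1 - y) ^ 2‖ < 1 := by
    rw [norm_div, norm_pow, div_lt_one (pow_pos (by linarith) 2)]
    exact hx.trans_le (pow_le_pow_left₀ (by linarith) hy' 2)
  have h := (hasSum_choose_mul_geometric_of_norm_lt_one m hq).mul_left
    (((1 - y) ^ 2) ^ (m + 1))⁻¹
  rw [one_div, ← mul_inv, ← mul_pow, mul_sub, mul_one, mul_div_cancel₀ _ hu] at h
  exact h.congr_fun fun j => by rw [div_pow, add_assoc, pow_add]; field_simp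

theorem norm_invPowDoubleTerm (m : ℕ) (x y : 𝕜) (p : ℕ × ℕ) :
    ‖invPowDoubleTerm m x y p‖ = invPowDoubleTerm m ‖x‖ ‖y‖ p := by
  simp only [invPowDoubleTerm, norm_mul, norm_pow, RCLike.norm_natCast]

theorem summable_invPowDoubleTerm (m : ℕ) {x y : 𝕜} (hy : ‖y‖ < 1)
    (hx : ‖x‖ < (1 - ‖y‖) ^ 2) : Summable (invPowDoubleTerm m x y) := by
  refine Summable.of_norm ?_
  simp_rw [norm_invPowDoubleTerm]
  have hy' : ‖(‖y‖ : ℝ)‖ < 1 := by rwa [norm_norm]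
  have hx' : ‖(‖x‖ : ℝ)‖ < (1 - ‖(‖y‖ : ℝ)‖) ^ 2 := by
    rwa [norm_norm, norm_norm]
  refine (summable_prod_of_nonneg fun p => by simp only [invPowDoubleTerm]; positivity).mpr
    ⟨fun j => (hasSum_invPowDoubleTerm_fiber m _ hy' j).summable, ?_⟩
  simp_rw [(hasSum_invPowDoubleTerm_fiber m _ hy' _).tsum_eq]
  exact (hasSum_invPowDoubleTerm_fiber_sums m hy' hx').summable

theorem hasSum_invPowDoubleTerm (m : ℕ) {x y : 𝕜} (hy : ‖y‖ < 1)
    (hx : ‖x‖ < (1 - ‖y‖) ^ 2) :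
    HasSum (invPowDoubleTerm m x y) ((((1 - y) ^ 2 - x) ^ (m + 1))⁻¹) := by
  have h := (summable_invPowDoubleTerm m hy hx).hasSum
  rwa [(h.prod_fiberwise (hasSum_invPowDoubleTerm_fiber m x hy)).unique
    (hasSum_invPowDoubleTerm_fiber_sums m hy hx)] at h

theorem sum_invPowDoubleTerm_eq_airyCoeffC_mul_pow (m n : ℕ) (t : 𝕜) :
    ∑ j ∈ range (n / 2 + 1), invPowDoubleTerm m (-t ^ 2 / 12) (t / 2) (j, n - 2 * j) =
      (airyCoeffC m n : 𝕜) * t ^ n := by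
  rw [airyCoeffC_eq_sum_choose, RCLike.ofReal_sum, sum_mul]
  refine sum_congr rfl fun j hj => ?_
  have hj : 2 * j ≤ n := by have := mem_range.mp hj; omega
  obtain ⟨k, rfl⟩ := Nat.exists_eq_add_of_le hj
  rw [invPowDoubleTerm, Nat.add_sub_cancel_left,
    show k + (2 * (j + m) + 1) = 2 * j + k + 2 * m + 1 by ring]
  have hpow : (-t ^ 2 / 12) ^ j * (t / 2) ^ k =
      (-1 / 3) ^ j / 2 ^ (2 * j + k) * t ^ (2 * j + k) := by
    rw [show -t ^ 2 / 12 = -1 / 3 * (t / 2) ^ 2 by ring, mul_pow, ← pow_mul, mul_assoc,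
      ← pow_add, div_pow t]
    field_simp
  push_cast
  rw [mul_assoc _ ((-t ^ 2 / 12) ^ j), hpow]
  ring

theorem hasSum_airyCoeffC_mul_pow_of_norm_lt_one (m : ℕ) {t : 𝕜} (ht : ‖t‖ < 1) :
    HasSum (fun n => (airyCoeffC m n : 𝕜) * t ^ n) (((1 - t + t ^ 2 / 3) ^ (m + 1))⁻¹) := by
  have hy : ‖t / 2‖ < 1 := by rw [norm_div, RCLike.norm_ofNat]; linarith
  have hx : ‖-t ^ 2 / 12‖ < (1 - ‖t / 2‖) ^ 2 := by
    rw [norm_div, norm_neg, norm_pow, norm_div, RCLike.norm_ofNat, RCLike.norm_ofNat]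
    nlinarith [norm_nonneg t]
  have h := (hasSum_invPowDoubleTerm m hy hx).sum_range_two_mul_add
  rw [show (1 - t / 2) ^ 2 - -t ^ 2 / 12 = 1 - t + t ^ 2 / 3 by ring] at h
  simpa only [sum_invPowDoubleTerm_eq_airyCoeffC_mul_pow] using h

end DoubleSeries

theorem hasFPowerSeriesOnBall_ofScalars_of_hasSum {f : ℂ → ℂ} {c : ℕ → ℂ} {r : ℝ≥0}
    (hr : 0 < r) (h : ∀ z : ℂ, ‖z‖ < r → HasSum (fun n => c n * z ^ n) (f z)) :
    HasFPowerSeriesOnBall f (FormalMultilinearSeries.ofScalars ℂ c) 0 r where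
  r_le := ENNReal.le_of_forall_nnreal_lt fun ρ hρ => by
    refine FormalMultilinearSeries.le_radius_of_tendsto _ (l := 0) ?_
    have hρ' : ‖(ρ : ℂ)‖ < r := by simpa using hρ
    simpa [FormalMultilinearSeries.ofScalars_norm] using
      (h _ hρ').summable.tendsto_atTop_zero.norm
  r_pos := by simpa using hr
  hasSum {z} hz := by
    simpa only [FormalMultilinearSeries.ofScalars_apply_eq, smul_eq_mul, zero_add] using
      h z (by simpa using hz)

theorem hasSum_of_differentiableOn_ball {f : ℂ → ℂ} {c : ℕ → ℂ} {ρ : ℝ≥0} {r : ℝ}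
    (hρ : 0 < ρ) (hsmall : ∀ z : ℂ, ‖z‖ < ρ → HasSum (fun n => c n * z ^ n) (f z))
    (hf : DifferentiableOn ℂ f (ball 0 r)) {z : ℂ} (hz : ‖z‖ < r) :
    HasSum (fun n => c n * z ^ n) (f z) := by
  obtain ⟨R, hzR, hRr⟩ := exists_between hz
  lift R to ℝ≥0 using (norm_nonneg z).trans hzR.le
  have hR : 0 < R := by exact_mod_cast (norm_nonneg z).trans_lt hzR
  have hbig := (hf.mono (closedBall_subset_ball hRr)).hasFPowerSeriesOnBall hR
  have h := ((hasFPowerSeriesOnBall_ofScalars_of_hasSum hρ hsmall).exchange_radius hbig).hasSum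
    (y := z) (by simpa using hzR)
  simpa only [FormalMultilinearSeries.ofScalars_apply_eq, smul_eq_mul, zero_add] using h

theorem one_sub_add_sq_div_three_ne_zero {z : ℂ} (hz : ‖z‖ < √3) :
    1 - z + z ^ 2 / 3 ≠ 0 := by
  intro h
  have hre := congrArg Complex.re h
  have him := congrArg Complex.im h
  simp only [pow_two, Complex.add_re, Complex.sub_re, Complex.one_re, Complex.div_ofNat_re,
    Complex.mul_re, Complex.zero_re, Complex.add_im, Complex.sub_im, Complex.one_im, zero_sub,
    Complex.div_ofNat_im, Complex.mul_im, Complex.zero_im] at hre him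
  have hz2 : z.re ^ 2 + z.im ^ 2 < 3 := by
    rw [Complex.norm_def, Real.sqrt_lt_sqrt_iff (Complex.normSq_nonneg z),
      Complex.normSq_apply] at hz
    nlinarith
  rcases mul_eq_zero.mp (show z.im * (2 * z.re - 3) = 0 by linarith) with him0 | hre0
  · nlinarith [sq_nonneg (z.re - 3 / 2)]
  · nlinarith

theorem hasSum_airyCoeffC_mul_pow (m : ℕ) {z : ℂ} (hz : ‖z‖ < √3) :
    HasSum (fun n => (airyCoeffC m n : ℂ) * z ^ n) (((1 - z + z ^ 2 / 3) ^ (m + 1))⁻¹) := by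
  refine hasSum_of_differentiableOn_ball one_pos
    (fun w hw => hasSum_airyCoeffC_mul_pow_of_norm_lt_one m (by simpa using hw)) ?_ hz
  intro w hw
  have hw0 := one_sub_add_sq_div_three_ne_zero (mem_ball_zero_iff.mp hw)
  exact ((by fun_prop : DifferentiableAt ℂ (fun w : ℂ => (1 - w + w ^ 2 / 3) ^ (m + 1)) w).inv
    (pow_ne_zero _ hw0)).differentiableWithinAt

theorem airyCoeffC_generating_function (m : ℕ) (t : ℝ) (ht : |t| < Real.sqrt 3) :
    ∑' n : ℕ, airyCoeffC m n * t ^ n = (1 - t + t ^ 2 / 3) ^ (-(m + 1 : ℤ)) := by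
  have h : HasSum (fun n => airyCoeffC m n * t ^ n) (((1 - t + t ^ 2 / 3) ^ (m + 1))⁻¹) := by
    exact_mod_cast hasSum_airyCoeffC_mul_pow m (z := t) (by simpa using ht)
  rw [h.tsum_eq, zpow_neg, ← Nat.cast_succ, zpow_natCast]
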